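/- There exists a nonzero polynomial P ∈ ℂ[λ,μ] such that whenever P(λ,μ) ≠ 0, there are exactly 8 quadruples (q,a,c,d) ∈ ℂ⁴ satisfying q² + 2λq + 1 = 0, a(1 + λq) = −(λ + q), 2μcd = 3a² + 3, and c² + d² + 2a² − 2λa + 2 = 0, and the corresponding 8 planes W(q,a,c,d) are pairwise distinct 2-dimensional subspaces of ℂ⁸, each a line on X_{λ,μ}. -/

import Mathlib

noncomputable section

/-- `Q₁ = x₀²+x₁²+x₂²+x₃²+x₄²+x₅² − 2μx₆x₇`. -/
def Q1 (m : ℂ) (x : Fin 8 → ℂ) : ℂ :=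
  x 0 ^ 2 + x 1 ^ 2 + x 2 ^ 2 + x 3 ^ 2 + x 4 ^ 2 + x 5 ^ 2 - 2 * m * x 6 * x 7

/-- `Q₂ = x₀²+x₁²+x₂²+x₃²+x₆²+x₇² − 2λx₄x₅`. -/
def Q2 (l : ℂ) (x : Fin 8 → ℂ) : ℂ :=
  x 0 ^ 2 + x 1 ^ 2 + x 2 ^ 2 + x 3 ^ 2 + x 6 ^ 2 + x 7 ^ 2 - 2 * l * x 4 * x 5

/-- `Q₃ = x₀²+x₁²+x₄²+x₅²+x₆²+x₇² − 2λx₂x₃`. -/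
def Q3 (l : ℂ) (x : Fin 8 → ℂ) : ℂ :=
  x 0 ^ 2 + x 1 ^ 2 + x 4 ^ 2 + x 5 ^ 2 + x 6 ^ 2 + x 7 ^ 2 - 2 * l * x 2 * x 3

/-- `Q₄ = x₂²+x₃²+x₄²+x₅²+x₆²+x₇² − 2λx₀x₁`. -/
def Q4 (l : ℂ) (x : Fin 8 → ℂ) : ℂ :=
  x 2 ^ 2 + x 3 ^ 2 + x 4 ^ 2 + x 5 ^ 2 + x 6 ^ 2 + x 7 ^ 2 - 2 * l * x 0 * x 1

/-- The plane `W(q,a,c,d) ⊆ ℂ⁸` spanned by `u = (1,q,ω,ωq,ω²,ω²q,0,0)` and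
`v = (a,1,a,1,a,1,c,d)`, for `ω` a primitive cube root of unity. -/
def linePlane8 (w q a c d : ℂ) : Submodule ℂ (Fin 8 → ℂ) :=
  Submodule.span ℂ
    {![1, q, w, w * q, w ^ 2, w ^ 2 * q, 0, 0], ![a, 1, a, 1, a, 1, c, d]}

/-- The system of equations characterizing the 8 lines of Lemma 4.1. -/
def lineEqs8 (l m q a c d : ℂ) : Prop :=
  q ^ 2 + 2 * l * q + 1 = 0 ∧ a * (1 + l * q) = -(l + q) ∧
    2 * m * c * d = 3 * a ^ 2 + 3 ∧ c ^ 2 + d ^ 2 + 2 * a ^ 2 - 2 * l * a + 2 = 0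

/-!
For a root `q` of `q² + 2λq + 1`, the second equation forces `a = -(λ + q)/(1 + λq)`, and the last
two equations say exactly that `(c + d)²` and `(c - d)²` take two prescribed values in `λ, μ, a`.
When `λμ(λ² - 1)(μ² - 1) ≠ 0` the two roots `q` are distinct and both prescribed values are nonzero,
because `μ(1 + λq)²(c ± d)² = ±6λq(1 - λ²)(1 ∓ μ)`; a choice of three signs then gives each of the
`2 · 2 · 2 = 8` solutions exactly once.

Since `c + d ≠ 0`, the vectors `u, v` are independent, and `W` determines `(q, a, c, d)`: the last
two coordinates show that `u'` has no `v`-component, and coordinates `0` and `2` (with `ω ≠ 1`)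
that `v'` has no `u`-component. The quadrics vanish on `W` by substitution, using `1 + ω + ω² = 0`.
-/

lemma sq_eq_sq_iff_exists_units_int {R : Type*} [CommRing R] [NoZeroDivisors R] {y z : R} :
    y ^ 2 = z ^ 2 ↔ ∃ ε : ℤˣ, y = ε * z := by
  rw [sq_eq_sq_iff_eq_or_eq_neg]
  constructor
  · rintro (h | h)
    · exact ⟨1, by simp [h]⟩
    · exact ⟨-1, by simp [h]⟩
  · rintro ⟨ε, rfl⟩
    rcases Int.units_eq_one_or ε with rfl | rfl <;> simp

lemma units_int_cast_mul_right_injective {R : Type*} [CommRing R] [IsDomain R] [CharZero R]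
    {z : R} (hz : z ≠ 0) : Function.Injective fun ε : ℤˣ => (ε : R) * z := fun _ _ h =>
  Units.ext (Int.cast_injective (mul_right_cancel₀ hz h))

lemma add_sq_and_sub_sq_iff {R : Type*} [Field R] [CharZero R] {c d u v : R} :
    (c + d) ^ 2 = u + v ∧ (c - d) ^ 2 = u - v ↔ 2 * c * d = v ∧ c ^ 2 + d ^ 2 = u := by
  constructor
  · rintro ⟨h₁, h₂⟩
    exact ⟨by linear_combination (h₁ - h₂) / 2, by linear_combination (h₁ + h₂) / 2⟩
  · rintro ⟨h₁, h₂⟩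
    exact ⟨by linear_combination h₁ + h₂, by linear_combination h₂ - h₁⟩

def csqrt (z : ℂ) : ℂ := z ^ (2⁻¹ : ℂ)

lemma csqrt_sq (z : ℂ) : csqrt z ^ 2 = z := by
  simp [csqrt]

lemma csqrt_ne_zero {z : ℂ} (hz : z ≠ 0) : csqrt z ≠ 0 := fun h =>
  hz (by rw [← csqrt_sq z, h]; ring)

lemma sq_eq_iff_exists_units_int_mul_csqrt {y z : ℂ} :
    y ^ 2 = z ↔ ∃ ε : ℤˣ, y = ε * csqrt z := by
  rw [← sq_eq_sq_iff_exists_units_int, csqrt_sq]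

lemma mem_linePlane8 {w q a c d : ℂ} {x : Fin 8 → ℂ} :
    x ∈ linePlane8 w q a c d ↔ ∃ s t : ℂ,
      x = ![s + t * a, s * q + t, s * w + t * a, s * (w * q) + t, s * w ^ 2 + t * a,
        s * (w ^ 2 * q) + t, t * c, t * d] := by
  rw [linePlane8, Submodule.mem_span_pair]
  refine exists₂_congr fun s t => ?_
  rw [eq_comm]
  constructor <;> rintro rfl <;> ext i <;> fin_cases i <;> simp

theorem finrank_linePlane8 {w q a c d : ℂ} (hcd : c ≠ 0 ∨ d ≠ 0) :
    Module.finrank ℂ (linePlane8 w q a c d) = 2 := by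
  have hli : LinearIndependent ℂ
      ![![1, q, w, w * q, w ^ 2, w ^ 2 * q, 0, 0], ![a, 1, a, 1, a, 1, c, d]] := by
    refine LinearIndependent.pair_iff.2 fun s t hst => ?_
    have h₀ := congrFun hst 0
    have h₆ := congrFun hst 6
    have h₇ := congrFun hst 7
    simp only [Pi.add_apply, Pi.smul_apply, smul_eq_mul, Pi.zero_apply, Matrix.cons_val, mul_one,
      mul_zero, zero_add, mul_eq_zero] at h₀ h₆ h₇
    have ht : t = 0 := by tauto
    exact ⟨by simpa [ht] using h₀, ht⟩
  rw [linePlane8, ← Matrix.range_cons_cons_empty, finrank_span_eq_card hli, Fintype.card_fin]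

theorem linePlane8_injective {w q a c d q' a' c' d' : ℂ} (hw : w ≠ 1) (hcd : c ≠ 0 ∨ d ≠ 0)
    (h : linePlane8 w q a c d = linePlane8 w q' a' c' d') :
    (q, a, c, d) = (q', a', c', d') := by
  have hu : ![1, q', w, w * q', w ^ 2, w ^ 2 * q', 0, 0] ∈ linePlane8 w q a c d :=
    h ▸ Submodule.subset_span (by simp)
  have hv : ![a', 1, a', 1, a', 1, c', d'] ∈ linePlane8 w q a c d :=
    h ▸ Submodule.subset_span (by simp)
  obtain ⟨s, t, hst⟩ := mem_linePlane8.1 hu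
  obtain ⟨s', t', hst'⟩ := mem_linePlane8.1 hv
  simp only [Matrix.vecCons_inj, and_true] at hst hst'
  obtain ⟨hu₀, hu₁, -, -, -, -, hu₆, hu₇⟩ := hst
  obtain ⟨hv₀, hv₁, hv₂, -, -, -, hv₆, hv₇⟩ := hst'
  obtain rfl : t = 0 := by simp only [eq_comm (a := (0 : ℂ)), mul_eq_zero] at hu₆ hu₇; tauto
  obtain rfl : s' = 0 := by
    have : s' * (w - 1) = 0 := by linear_combination hv₀ - hv₂
    exact (mul_eq_zero.1 this).resolve_right (sub_ne_zero.2 hw)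
  obtain rfl : s = 1 := by linear_combination -hu₀
  obtain rfl : t' = 1 := by linear_combination -hv₁
  simp only [Prod.mk.injEq]
  exact ⟨by linear_combination -hu₁, by linear_combination -hv₀, by linear_combination -hv₆,
    by linear_combination -hv₇⟩

theorem quadrics_eq_zero_of_mem_linePlane8 {w l m q a c d : ℂ} (hw : w ^ 2 + w + 1 = 0)
    (h : lineEqs8 l m q a c d) {x : Fin 8 → ℂ} (hx : x ∈ linePlane8 w q a c d) :
    Q1 m x = 0 ∧ Q2 l x = 0 ∧ Q3 l x = 0 ∧ Q4 l x = 0 := by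
  obtain ⟨e₁, e₂, e₃, e₄⟩ := h
  obtain ⟨s, t, rfl⟩ := mem_linePlane8.1 hx
  simp only [Q1, Q2, Q3, Q4, Matrix.cons_val]
  refine ⟨?_, ?_, ?_, ?_⟩
  · linear_combination (s ^ 2 * (1 + q ^ 2) * (w ^ 2 - w + 1) + 2 * s * t * (a + q)) * hw
      - t ^ 2 * e₃
  · linear_combination (-s ^ 2 * w) * e₁ + (-2 * s * t * w ^ 2) * e₂ + t ^ 2 * e₄
      + (s ^ 2 * (1 + q ^ 2 - 2 * l * q * w * (w - 1)) + 2 * s * t * (a + q)) * hw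
  · linear_combination (-s ^ 2 * w ^ 2) * e₁ + (-2 * s * t * w) * e₂ + t ^ 2 * e₄
      + (s ^ 2 * (1 + q ^ 2) * (w ^ 2 - w + 1) + 2 * s * t * (a + q)) * hw
  · linear_combination (-s ^ 2) * e₁ + (-2 * s * t) * e₂ + t ^ 2 * e₄
      + (s ^ 2 * (1 + q ^ 2) * (w ^ 2 - w + 1) + 2 * s * t * (a + q)) * hw

def lineA (l q : ℂ) : ℂ := -(l + q) / (1 + l * q)

def sqAdd (l m a : ℂ) : ℂ := 2 * l * a - 2 * a ^ 2 - 2 + (3 * a ^ 2 + 3) / m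

def sqSub (l m a : ℂ) : ℂ := 2 * l * a - 2 * a ^ 2 - 2 - (3 * a ^ 2 + 3) / m

lemma one_add_mul_ne_zero {l q : ℂ} (hq : q ^ 2 + 2 * l * q + 1 = 0) (hl : l ^ 2 ≠ 1) :
    1 + l * q ≠ 0 := fun h => hl (by linear_combination (-l ^ 2) * hq + (l * q - 1 + 2 * l ^ 2) * h)

lemma lineEqs8_iff {l m q a c d : ℂ} (hl : l ^ 2 ≠ 1) (hm : m ≠ 0) :
    lineEqs8 l m q a c d ↔ q ^ 2 + 2 * l * q + 1 = 0 ∧ a = lineA l q ∧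
      (c + d) ^ 2 = sqAdd l m a ∧ (c - d) ^ 2 = sqSub l m a := by
  unfold lineEqs8
  refine and_congr_right fun hq => ?_
  rw [lineA, eq_div_iff (one_add_mul_ne_zero hq hl), sqAdd, sqSub, add_sq_and_sub_sq_iff,
    eq_div_iff hm]
  refine and_congr_right fun _ => and_congr ?_ ?_ <;> constructor <;> intro h <;>
    linear_combination h

lemma mul_sqAdd_lineA_and_mul_sqSub_lineA {l m q : ℂ} (hq : q ^ 2 + 2 * l * q + 1 = 0)
    (hl : l ^ 2 ≠ 1) (hm : m ≠ 0) :
    m * (1 + l * q) ^ 2 * sqAdd l m (lineA l q) = 6 * l * q * (1 - l ^ 2) * (1 - m) ∧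
      m * (1 + l * q) ^ 2 * sqSub l m (lineA l q) = -(6 * l * q * (1 - l ^ 2) * (1 + m)) := by
  have hlq := one_add_mul_ne_zero hq hl
  have ha : lineA l q * (1 + l * q) = -(l + q) := div_mul_cancel₀ _ hlq
  set a := lineA l q
  have ha2 : a ^ 2 * (1 + l * q) ^ 2 = l ^ 2 - 1 := by
    linear_combination (a * (1 + l * q) - (l + q)) * ha + hq
  have hla : l * a * (1 + l * q) ^ 2 = -(l * q * (1 - l ^ 2)) := by
    linear_combination l * (1 + l * q) * ha - l ^ 2 * hq
  have hsq : (1 + l * q) ^ 2 = (1 - l ^ 2) * (1 + 2 * l * q) := by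
    linear_combination l ^ 2 * hq
  have hY : m * ((3 * a ^ 2 + 3) / m) = 3 * a ^ 2 + 3 := mul_div_cancel₀ _ hm
  unfold sqAdd sqSub
  constructor
  · linear_combination (1 + l * q) ^ 2 * hY + (3 - 2 * m) * ha2 + 2 * m * hla + (3 - 2 * m) * hsq
  · linear_combination -(1 + l * q) ^ 2 * hY - (3 + 2 * m) * ha2 + 2 * m * hla - (3 + 2 * m) * hsq

lemma sqAdd_lineA_ne_zero_and_sqSub_lineA_ne_zero {l m q : ℂ} (hq : q ^ 2 + 2 * l * q + 1 = 0)
    (hl₀ : l ≠ 0) (hl : l ^ 2 ≠ 1) (hm₀ : m ≠ 0) (hm : m ^ 2 ≠ 1) :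
    sqAdd l m (lineA l q) ≠ 0 ∧ sqSub l m (lineA l q) ≠ 0 := by
  obtain ⟨hadd, hsub⟩ := mul_sqAdd_lineA_and_mul_sqSub_lineA hq hl hm₀
  have hq₀ : q ≠ 0 := by rintro rfl; norm_num at hq
  have hl' : 1 - l ^ 2 ≠ 0 := sub_ne_zero.2 (Ne.symm hl)
  have hm' : (1 - m) * (1 + m) ≠ 0 := by
    intro h; exact hm (by linear_combination -h)
  obtain ⟨hm₁, hm₂⟩ := mul_ne_zero_iff.1 hm'
  constructor <;> intro h <;> simp [h, hl₀, hq₀, hl', hm₁, hm₂] at hadd hsub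

lemma ne_zero_or_ne_zero_of_lineEqs8 {l m q a c d : ℂ} (hl₀ : l ≠ 0) (hl : l ^ 2 ≠ 1)
    (hm₀ : m ≠ 0) (hm : m ^ 2 ≠ 1) (h : lineEqs8 l m q a c d) : c ≠ 0 ∨ d ≠ 0 := by
  obtain ⟨hq, rfl, hσ, -⟩ := (lineEqs8_iff hl hm₀).1 h
  have h₀ := (sqAdd_lineA_ne_zero_and_sqSub_lineA_ne_zero hq hl₀ hl hm₀ hm).1
  rw [← hσ] at h₀
  by_contra! hcd
  simp [hcd] at h₀

lemma sq_add_two_mul_add_one_eq_zero_iff {l q : ℂ} :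
    q ^ 2 + 2 * l * q + 1 = 0 ↔ ∃ ε : ℤˣ, q = ε * csqrt (l ^ 2 - 1) - l := by
  have : q ^ 2 + 2 * l * q + 1 = 0 ↔ (q + l) ^ 2 = l ^ 2 - 1 := by
    constructor <;> intro h <;> linear_combination h
  rw [this, sq_eq_iff_exists_units_int_mul_csqrt]
  simp only [eq_sub_iff_add_eq]

def lineSol (l m : ℂ) (ε : ℤˣ × ℤˣ × ℤˣ) : ℂ × ℂ × ℂ × ℂ :=
  let q := ε.1 * csqrt (l ^ 2 - 1) - l
  let a := lineA l q
  let σ := ε.2.1 * csqrt (sqAdd l m a)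
  let ρ := ε.2.2 * csqrt (sqSub l m a)
  (q, a, (σ + ρ) / 2, (σ - ρ) / 2)

lemma lineEqs8_iff_exists_lineSol {l m q a c d : ℂ} (hl : l ^ 2 ≠ 1) (hm : m ≠ 0) :
    lineEqs8 l m q a c d ↔ ∃ ε, lineSol l m ε = (q, a, c, d) := by
  rw [lineEqs8_iff hl hm]
  constructor
  · rintro ⟨hq, rfl, hσ, hρ⟩
    obtain ⟨ε₁, rfl⟩ := sq_add_two_mul_add_one_eq_zero_iff.1 hq
    obtain ⟨ε₂, hσ⟩ := sq_eq_iff_exists_units_int_mul_csqrt.1 hσ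
    obtain ⟨ε₃, hρ⟩ := sq_eq_iff_exists_units_int_mul_csqrt.1 hρ
    refine ⟨(ε₁, ε₂, ε₃), ?_⟩
    simp only [lineSol, ← hσ, ← hρ, Prod.mk.injEq, true_and]
    constructor <;> ring
  · rintro ⟨⟨ε₁, ε₂, ε₃⟩, h⟩
    simp only [lineSol, Prod.mk.injEq] at h
    obtain ⟨rfl, rfl, rfl, rfl⟩ := h
    refine ⟨sq_add_two_mul_add_one_eq_zero_iff.2 ⟨ε₁, rfl⟩, rfl,
      sq_eq_iff_exists_units_int_mul_csqrt.2 ⟨ε₂, ?_⟩,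
      sq_eq_iff_exists_units_int_mul_csqrt.2 ⟨ε₃, ?_⟩⟩ <;> ring

lemma lineSol_injective {l m : ℂ} (hl₀ : l ≠ 0) (hl : l ^ 2 ≠ 1) (hm₀ : m ≠ 0) (hm : m ^ 2 ≠ 1) :
    Function.Injective (lineSol l m) := by
  rintro ⟨ε₁, ε₂, ε₃⟩ ⟨ε₁', ε₂', ε₃'⟩ h
  simp only [lineSol, Prod.mk.injEq] at h
  obtain ⟨hq, -, hc, hd⟩ := h
  obtain rfl : ε₁ = ε₁' := units_int_cast_mul_right_injective
    (csqrt_ne_zero (sub_ne_zero.2 hl)) (by linear_combination hq)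
  obtain ⟨hσ, hρ⟩ := sqAdd_lineA_ne_zero_and_sqSub_lineA_ne_zero
    (sq_add_two_mul_add_one_eq_zero_iff.2 ⟨ε₁, rfl⟩) hl₀ hl hm₀ hm
  obtain rfl : ε₂ = ε₂' := units_int_cast_mul_right_injective (csqrt_ne_zero hσ)
    (by linear_combination hc + hd)
  obtain rfl : ε₃ = ε₃' := units_int_cast_mul_right_injective (csqrt_ne_zero hρ)
    (by linear_combination hc - hd)
  rfl

theorem ncard_setOf_lineEqs8 {l m : ℂ} (hl₀ : l ≠ 0) (hl : l ^ 2 ≠ 1) (hm₀ : m ≠ 0)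
    (hm : m ^ 2 ≠ 1) :
    {t : ℂ × ℂ × ℂ × ℂ | lineEqs8 l m t.1 t.2.1 t.2.2.1 t.2.2.2}.ncard = 8 := by
  have : {t : ℂ × ℂ × ℂ × ℂ | lineEqs8 l m t.1 t.2.1 t.2.2.1 t.2.2.2} =
      Set.range (lineSol l m) := by
    ext ⟨q, a, c, d⟩
    exact lineEqs8_iff_exists_lineSol hl hm₀
  rw [this, Set.ncard_range_of_injective (lineSol_injective hl₀ hl hm₀ hm)]
  simp [Nat.card_eq_fintype_card]

theorem stmt_13 (w : ℂ) (hw : IsPrimitiveRoot w 3) :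
    ∃ P : MvPolynomial (Fin 2) ℂ, P ≠ 0 ∧
      ∀ l m : ℂ, MvPolynomial.eval ![l, m] P ≠ 0 →
        ({t : ℂ × ℂ × ℂ × ℂ | lineEqs8 l m t.1 t.2.1 t.2.2.1 t.2.2.2}.ncard = 8 ∧
          Set.InjOn (fun t : ℂ × ℂ × ℂ × ℂ => linePlane8 w t.1 t.2.1 t.2.2.1 t.2.2.2)
            {t : ℂ × ℂ × ℂ × ℂ | lineEqs8 l m t.1 t.2.1 t.2.2.1 t.2.2.2} ∧
          ∀ t : ℂ × ℂ × ℂ × ℂ, lineEqs8 l m t.1 t.2.1 t.2.2.1 t.2.2.2 →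
            Module.finrank ℂ (linePlane8 w t.1 t.2.1 t.2.2.1 t.2.2.2) = 2 ∧
            ∀ x ∈ linePlane8 w t.1 t.2.1 t.2.2.1 t.2.2.2,
              Q1 m x = 0 ∧ Q2 l x = 0 ∧ Q3 l x = 0 ∧ Q4 l x = 0) := by
  have hw₁ : w ≠ 1 := hw.ne_one (by norm_num)
  have hw₃ : w ^ 2 + w + 1 = 0 := by
    have h := hw.geom_sum_eq_zero (by norm_num)
    simp only [Finset.sum_range_succ, Finset.sum_range_zero] at h
    linear_combination h
  refine ⟨MvPolynomial.X 0 * (MvPolynomial.X 0 ^ 2 - 1) * MvPolynomial.X 1 *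
    (MvPolynomial.X 1 ^ 2 - 1), fun h => ?_, fun l m hP => ?_⟩
  · have h₂ := congrArg (MvPolynomial.eval ![(2 : ℂ), 2]) h
    norm_num at h₂
  simp only [map_mul, map_sub, map_pow, map_one, MvPolynomial.eval_X, Matrix.cons_val_zero,
    Matrix.cons_val_one, mul_ne_zero_iff, sub_ne_zero] at hP
  obtain ⟨⟨⟨hl₀, hl⟩, hm₀⟩, hm⟩ := hP
  have hcd : ∀ t : ℂ × ℂ × ℂ × ℂ, lineEqs8 l m t.1 t.2.1 t.2.2.1 t.2.2.2 →
      t.2.2.1 ≠ 0 ∨ t.2.2.2 ≠ 0 := fun _ => ne_zero_or_ne_zero_of_lineEqs8 hl₀ hl hm₀ hm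
  refine ⟨ncard_setOf_lineEqs8 hl₀ hl hm₀ hm, fun t ht t' _ h => linePlane8_injective hw₁
    (hcd t ht) h, fun t ht => ⟨finrank_linePlane8 (hcd t ht), fun x hx =>
    quadrics_eq_zero_of_mem_linePlane8 hw₃ ht hx⟩⟩
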